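/- arXiv:2009.04328 — 2 statements merged into one kernel-verified Lean document; each statement's English description precedes it below -/
import Mathlib

section
/- For θ ∈ (0,1] and n ≥ 1, define the adapted time-net τ_n^θ = (t_{i,n}^θ)_{i=0}^n on [0,T] by t_{i,n}^θ := T(1 - (1 - i/n)^{1/θ}). Then the θ-mesh size ‖τ_n^θ‖_θ := max_{1≤i≤n} (t_{i,n}^θ - t_{i-1,n}^θ)/(T - t_{i-1,n}^θ)^{1-θ} satisfies T^θ/n ≤ ‖τ_n^θ‖_θ ≤ T^θ/(θ n). -/
/-!
Write `p = 1/θ`, `a = 1 - (i-1)/n` and `b = 1 - i/n`, so that `T - t_{i-1} = T a^p` and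
`t_i - t_{i-1} = T (a^p - b^p)`; the `i`-th ratio of the mesh is then
`T^θ (a^p - b^p) / a^(p-1)`. Since `x ↦ x^p` is convex with derivative `p x^(p-1)`, the secant
slope `(a^p - b^p)/(a - b)` lies between `a^(p-1)` and `p a^(p-1)`, and `a - b = 1/n`.
So every ratio lies between `T^θ/n` and `T^θ/(θ n)`.
-/

open Real

namespace Real

theorem rpow_sub_one_mul_sub_le_rpow_sub_rpow {a b p : ℝ} (hb : 0 ≤ b) (hba : b ≤ a)
    (hp : 1 ≤ p) : a ^ (p - 1) * (a - b) ≤ a ^ p - b ^ p := by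
  have ha : 0 ≤ a := hb.trans hba
  have hsplit : ∀ x : ℝ, 0 ≤ x → x ^ p = x ^ (p - 1) * x := fun x hx => by
    simpa using rpow_add' hx (by linarith : p - 1 + 1 ≠ 0)
  have hmono : b ^ (p - 1) * b ≤ a ^ (p - 1) * b :=
    mul_le_mul_of_nonneg_right (rpow_le_rpow hb hba (by linarith)) hb
  rw [hsplit a ha, hsplit b hb]
  linarith

theorem rpow_sub_rpow_le_mul_rpow_sub_one_mul_sub {a b p : ℝ} (hb : 0 ≤ b) (hba : b ≤ a)
    (hp : 1 ≤ p) : a ^ p - b ^ p ≤ p * a ^ (p - 1) * (a - b) := by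
  rcases hba.eq_or_lt with rfl | hlt
  · simp
  have hslope : slope (fun x : ℝ => x ^ p) b a ≤ p * a ^ (p - 1) :=
    (convexOn_rpow hp).slope_le_of_hasDerivAt hb (hb.trans hba) hlt
      (hasDerivAt_rpow_const (Or.inr hp))
  rw [slope_def_field, div_le_iff₀ (sub_pos.mpr hlt)] at hslope
  exact hslope

end Real

theorem mul_div_mul_rpow_one_sub {T θ : ℝ} (hT : 0 < T) {x : ℝ} (hx : 0 ≤ x) (y : ℝ) :
    T * y / (T * x) ^ (1 - θ) = T ^ θ * (y / x ^ (1 - θ)) := by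
  have hT' : T = T ^ θ * T ^ (1 - θ) := by rw [← rpow_add hT]; simp
  rw [mul_rpow hT.le hx]
  nth_rw 1 [hT']
  have hT1 : T ^ (1 - θ) ≠ 0 := (rpow_pos_of_pos hT _).ne'
  field_simp

theorem rpow_one_div_sub_rpow_one_div_div_mem_Icc {θ a b : ℝ} (hθ : θ ∈ Set.Ioc (0 : ℝ) 1)
    (ha : 0 < a) (hb : 0 ≤ b) (hba : b ≤ a) :
    (a ^ (1 / θ) - b ^ (1 / θ)) / (a ^ (1 / θ)) ^ (1 - θ) ∈ Set.Icc (a - b) ((a - b) / θ) := by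
  obtain ⟨hθ0, hθ1⟩ := hθ
  have hp : 1 ≤ 1 / θ := by rw [le_div_iff₀ hθ0]; linarith
  have hden : (a ^ (1 / θ)) ^ (1 - θ) = a ^ (1 / θ - 1) := by
    rw [← rpow_mul ha.le]; congr 1; field_simp
  have hpos : 0 < a ^ (1 / θ - 1) := rpow_pos_of_pos ha _
  rw [hden]
  constructor
  · rw [le_div_iff₀ hpos, mul_comm]
    exact rpow_sub_one_mul_sub_le_rpow_sub_rpow hb hba hp
  · rw [div_le_div_iff₀ hpos hθ0]
    have hsecant := rpow_sub_rpow_le_mul_rpow_sub_one_mul_sub hb hba hp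
    calc (a ^ (1 / θ) - b ^ (1 / θ)) * θ ≤ 1 / θ * a ^ (1 / θ - 1) * (a - b) * θ := by gcongr
      _ = (a - b) * a ^ (1 / θ - 1) := by field_simp

theorem adaptedNet_ratio_mem_Icc {T θ : ℝ} (hT : 0 < T) (hθ : θ ∈ Set.Ioc (0 : ℝ) 1)
    {n : ℕ} {t : ℕ → ℝ} (ht : ∀ i ≤ n, t i = T * (1 - (1 - (i : ℝ) / n) ^ (1 / θ)))
    {i : ℕ} (hi : i ∈ Finset.Icc 1 n) :
    (t i - t (i - 1)) / (T - t (i - 1)) ^ (1 - θ) ∈ Set.Icc (T ^ θ / n) (T ^ θ / (θ * n)) := by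
  obtain ⟨hi1, hin⟩ := Finset.mem_Icc.mp hi
  have hn : (0 : ℝ) < n := by exact_mod_cast hi1.trans hin
  have hi1' : (1 : ℝ) ≤ i := by exact_mod_cast hi1
  have hin' : (i : ℝ) ≤ n := by exact_mod_cast hin
  set a : ℝ := 1 - ((i : ℝ) - 1) / n
  set b : ℝ := 1 - (i : ℝ) / n
  have ha : 0 < a := by simp only [a]; rw [sub_pos, div_lt_one hn]; linarith
  have hb : 0 ≤ b := by simp only [b]; rw [sub_nonneg, div_le_one hn]; linarith
  have hab : a - b = 1 / n := by simp only [a, b]; ring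
  have hti : t i = T * (1 - b ^ (1 / θ)) := ht i hin
  have hti' : t (i - 1) = T * (1 - a ^ (1 / θ)) := by
    rw [ht (i - 1) (by omega), Nat.cast_sub hi1, Nat.cast_one]
  have hratio : (t i - t (i - 1)) / (T - t (i - 1)) ^ (1 - θ) =
      T ^ θ * ((a ^ (1 / θ) - b ^ (1 / θ)) / (a ^ (1 / θ)) ^ (1 - θ)) := by
    rw [← mul_div_mul_rpow_one_sub hT (rpow_nonneg ha.le _), hti, hti']
    ring_nf
  obtain ⟨hlow, hupp⟩ := rpow_one_div_sub_rpow_one_div_div_mem_Icc hθ ha hb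
    (by rw [← sub_nonneg, hab]; positivity)
  rw [hab] at hlow hupp
  rw [hratio]
  constructor
  · calc T ^ θ / n = T ^ θ * (1 / n) := by ring
      _ ≤ _ := by gcongr
  · calc _ ≤ T ^ θ * (1 / n / θ) := by gcongr
      _ = T ^ θ / (θ * n) := by field_simp

/-- the adapted time-net `t i = T(1-(1-i/n)^{1/θ})` has `θ`-mesh size
between `T^θ/n` and `T^θ/(θ n)`. -/
theorem stmt1 (T θ : ℝ) (hT : 0 < T) (hθ : θ ∈ Set.Ioc (0 : ℝ) 1) (n : ℕ) (hn : 1 ≤ n)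
    (t : ℕ → ℝ) (ht : ∀ i ≤ n, t i = T * (1 - (1 - (i : ℝ) / n) ^ (1 / θ))) :
    T ^ θ / n ≤
      (Finset.Icc 1 n).sup' (Finset.nonempty_Icc.mpr hn)
        (fun i => (t i - t (i - 1)) / (T - t (i - 1)) ^ (1 - θ)) ∧
    (Finset.Icc 1 n).sup' (Finset.nonempty_Icc.mpr hn)
        (fun i => (t i - t (i - 1)) / (T - t (i - 1)) ^ (1 - θ)) ≤ T ^ θ / (θ * n) := by
  have hratio := fun i (hi : i ∈ Finset.Icc 1 n) => adaptedNet_ratio_mem_Icc hT hθ ht hi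
  have h1 : 1 ∈ Finset.Icc 1 n := Finset.mem_Icc.mpr ⟨le_rfl, hn⟩
  exact ⟨Finset.le_sup'_of_le _ h1 (hratio 1 h1).1, Finset.sup'_le _ _ fun i hi => (hratio i hi).2⟩
end

section
/- Let ν be a Lévy measure on ℝ (i.e., ν({0}) = 0 and ∫(x² ∧ 1) ν(dx) < ∞) admitting a density p(x) = ν(dx)/dx such that 0 < liminf_{|x|→0} |x|^{1+α} p(x) ≤ limsup_{|x|→0} |x|^{1+α} p(x) < ∞ for some α ∈ (0,2). Then ν ∈ 𝒮₁(α): there exist Lévy measures ν₁, ν₂ with ν = ν₁ + ν₂, where ν₁(dx) = k(x)|x|^{-α-1} 𝟙_{x≠0} dx with 0 < liminf_{x→0} k(x) ≤ limsup_{x→0} k(x) < ∞ and x ↦ k(x)/|x|^α nondecreasing on (-∞,0) and nonincreasing on (0,∞), and limsup_{|u|→∞} |u|^{-α} ∫(1 - cos(ux)) ν₂(dx) < ∞. -/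
open MeasureTheory Filter

/-- A Lévy measure on `ℝ`: no mass at `0` and `∫ (x² ∧ 1) ν(dx) < ∞`. -/
def IsLevyMeasure (ν : Measure ℝ) : Prop :=
  ν {0} = 0 ∧ ∫⁻ x, ENNReal.ofReal (min (x ^ 2) 1) ∂ν < ⊤

/-- `∫ (1 - cos(ux)) ν(dx)` as an `ℝ≥0∞`-valued integral. -/
noncomputable def cosInt (ν : Measure ℝ) (u : ℝ) : ENNReal :=
  ∫⁻ x, ENNReal.ofReal (1 - Real.cos (u * x)) ∂ν

/-- The filter `|u| → ∞`. -/
def absAtTop : Filter ℝ := Filter.comap (fun u : ℝ => |u|) Filter.atTop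

/-- The class `𝒮₂(α)`: `0 < liminf_{|u|→∞} |u|^{-α} ∫(1-cos(ux))ν(dx) ≤ limsup < ∞`. -/
noncomputable def MemS2 (α : ℝ) (ν : Measure ℝ) : Prop :=
  0 < Filter.liminf (fun u : ℝ => cosInt ν u / ENNReal.ofReal (|u| ^ α)) absAtTop ∧
  Filter.limsup (fun u : ℝ => cosInt ν u / ENNReal.ofReal (|u| ^ α)) absAtTop < ⊤

/-- The class `𝒮₁(α)`: `ν = ν₁ + ν₂` with `ν₁` having a density `k(x)/|x|^{α+1}` where `k`
is bounded away from `0` and `∞` near the origin and `k(x)/|x|^α` is monotone on each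
half-line, while `ν₂` satisfies `limsup_{|u|→∞} |u|^{-α} ∫(1-cos(ux))ν₂(dx) < ∞`. -/
noncomputable def MemS1 (α : ℝ) (ν : Measure ℝ) : Prop :=
  ∃ (ν₁ ν₂ : Measure ℝ) (k : ℝ → ℝ),
    IsLevyMeasure ν₁ ∧ IsLevyMeasure ν₂ ∧ ν = ν₁ + ν₂ ∧
    ν₁ = volume.withDensity
      (fun x => if x = 0 then 0 else ENNReal.ofReal (k x / |x| ^ (α + 1))) ∧
    (∃ c C : ℝ, 0 < c ∧ ∀ᶠ x in nhdsWithin 0 {(0 : ℝ)}ᶜ, c ≤ k x ∧ k x ≤ C) ∧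
    (∀ x y : ℝ, x ≤ y → y < 0 → k x / |x| ^ α ≤ k y / |y| ^ α) ∧
    (∀ x y : ℝ, 0 < x → x ≤ y → k y / |y| ^ α ≤ k x / |x| ^ α) ∧
    (∃ C : ℝ, ∀ᶠ u in absAtTop, cosInt ν₂ u ≤ ENNReal.ofReal (C * |u| ^ α))

/-!
Choose `ε > 0` with `c ≤ |x|^(1+α) p(x) ≤ C` for `0 < |x| < ε`, and split off
`ν₁(dx) = c |x|^(-1-α) 𝟙_{0<|x|<ε} dx`, which lies below `ν`; then `ν₂ = ν - ν₁` also lies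
below `ν`, so it suffices to bound `∫ (1 - cos(ux)) ν(dx)`. Using `1 - cos t ≤ 2 min(t², 1)`,
the part of `ν` near the origin is dominated by `C ∫ min(u²x², 1) |x|^(-1-α) dx`, which by
scaling equals `2C (1/(2-α) + 1/α) |u|^α`, while the part away from the origin has finite mass.
-/

open Real Set
open scoped ENNReal

theorem one_sub_cos_le_two_mul_min_sq_one (t : ℝ) : 1 - cos t ≤ 2 * min (t ^ 2) 1 := by
  rcases le_total (t ^ 2) 1 with h | h
  · rw [min_eq_left h]
    nlinarith [one_sub_sq_div_two_le_cos (x := t)]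
  · rw [min_eq_right h]
    linarith [neg_one_le_cos t]

theorem lintegral_Ioc_zero_inv_min_sq_one_mul_rpow {α v : ℝ} (hα2 : α < 2) (hv : 0 < v) :
    ∫⁻ x in Ioc 0 v⁻¹, ENNReal.ofReal (min ((v * x) ^ 2) 1 * x ^ (-(1 + α)))
      = ENNReal.ofReal (v ^ α / (2 - α)) := by
  have hint : IntegrableOn (fun x : ℝ => v ^ 2 * x ^ (1 - α)) (Ioc 0 v⁻¹) :=
    Integrable.const_mul ((intervalIntegrable_iff_integrableOn_Ioc_of_le (inv_pos.2 hv).le).1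
      (intervalIntegral.intervalIntegrable_rpow' (by linarith))) _
  rw [setLIntegral_congr_fun measurableSet_Ioc
      (g := fun x => ENNReal.ofReal (v ^ 2 * x ^ (1 - α))),
    ← ofReal_integral_eq_lintegral_ofReal hint, integral_const_mul,
    ← intervalIntegral.integral_of_le (inv_pos.2 hv).le, integral_rpow (Or.inl (by linarith)),
    show 1 - α + 1 = 2 - α by ring, zero_rpow (by linarith), sub_zero, inv_rpow hv.le,
    ← rpow_neg hv.le, ← rpow_natCast, ← mul_div_assoc, ← rpow_add hv]
  · norm_num
  · exact ae_restrict_of_forall_mem measurableSet_Ioc fun x hx => by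
      have := rpow_nonneg hx.1.le (1 - α); positivity
  · rintro x ⟨hx0, hx1⟩
    have hvx : v * x ≤ 1 := by
      simpa [hv.ne'] using mul_le_mul_of_nonneg_left hx1 hv.le
    dsimp only
    rw [min_eq_left (by nlinarith [mul_pos hv hx0]), mul_pow, mul_assoc, ← rpow_natCast x 2,
      ← rpow_add hx0]
    norm_num
    ring_nf

theorem lintegral_Ioi_inv_min_sq_one_mul_rpow {α v : ℝ} (hα0 : 0 < α) (hv : 0 < v) :
    ∫⁻ x in Ioi v⁻¹, ENNReal.ofReal (min ((v * x) ^ 2) 1 * x ^ (-(1 + α)))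
      = ENNReal.ofReal (v ^ α / α) := by
  have hv' : 0 < v⁻¹ := inv_pos.2 hv
  rw [setLIntegral_congr_fun measurableSet_Ioi (g := fun x => ENNReal.ofReal (x ^ (-(1 + α)))),
    ← ofReal_integral_eq_lintegral_ofReal (integrableOn_Ioi_rpow_of_lt (by linarith) hv'),
    integral_Ioi_rpow_of_lt (by linarith) hv', show -(1 + α) + 1 = -α by ring, inv_rpow hv.le,
    ← rpow_neg hv.le, neg_neg, neg_div_neg_eq]
  · exact ae_restrict_of_forall_mem measurableSet_Ioi fun x hx => rpow_nonneg (hv'.trans hx).le _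
  · intro x hx
    have hvx : 1 ≤ (v * x) ^ 2 := by
      have : 1 ≤ v * x := by rw [mem_Ioi, inv_lt_iff_one_lt_mul₀' hv] at hx; exact hx.le
      nlinarith
    dsimp only
    rw [min_eq_right hvx, one_mul]

theorem lintegral_Ioi_min_sq_one_mul_rpow {α v : ℝ} (hα0 : 0 < α) (hα2 : α < 2) (hv : 0 < v) :
    ∫⁻ x in Ioi 0, ENNReal.ofReal (min ((v * x) ^ 2) 1 * x ^ (-(1 + α)))
      = ENNReal.ofReal ((1 / (2 - α) + 1 / α) * v ^ α) := by
  rw [← Ioc_union_Ioi_eq_Ioi (inv_pos.2 hv).le, lintegral_union measurableSet_Ioi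
    (Ioc_disjoint_Ioi le_rfl), lintegral_Ioc_zero_inv_min_sq_one_mul_rpow hα2 hv,
    lintegral_Ioi_inv_min_sq_one_mul_rpow hα0 hv, ← ENNReal.ofReal_add]
  · ring_nf
  all_goals have : 0 < 2 - α := by linarith
  all_goals positivity

theorem lintegral_comp_abs (f : ℝ → ℝ≥0∞) :
    ∫⁻ x, f |x| = 2 * ∫⁻ x in Ioi 0, f x := by
  have hIic : ∫⁻ x in Iic 0, f |x| = ∫⁻ x in Ioi 0, f x := by
    rw [restrict_Ioi_eq_restrict_Ici, ← lintegral_indicator measurableSet_Iic,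
      ← lintegral_indicator measurableSet_Ici, ← lintegral_neg_eq_self]
    congr 1 with x
    by_cases hx : 0 ≤ x
    · simp [hx, abs_of_nonneg hx]
    · simp [hx]
  rw [← lintegral_add_compl _ measurableSet_Ioi, compl_Ioi, hIic, two_mul]
  congr 1
  exact setLIntegral_congr_fun measurableSet_Ioi fun x hx => by rw [abs_of_pos hx]

theorem lintegral_min_sq_one_mul_abs_rpow {α u : ℝ} (hα0 : 0 < α) (hα2 : α < 2) (hu : u ≠ 0) :
    ∫⁻ x, ENNReal.ofReal (min ((u * x) ^ 2) 1 * |x| ^ (-(1 + α)))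
      = ENNReal.ofReal (2 * (1 / (2 - α) + 1 / α) * |u| ^ α) := by
  have h := lintegral_comp_abs fun x => ENNReal.ofReal (min ((|u| * x) ^ 2) 1 * x ^ (-(1 + α)))
  rw [lintegral_Ioi_min_sq_one_mul_rpow hα0 hα2 (abs_pos.2 hu)] at h
  simp only [← abs_mul, sq_abs] at h
  rw [h, ← ENNReal.ofReal_ofNat 2, ← ENNReal.ofReal_mul zero_le_two, mul_assoc]

theorem cosInt_le_two_mul_lintegral_min_sq_one (ν : Measure ℝ) (u : ℝ) :
    cosInt ν u ≤ 2 * ∫⁻ x, ENNReal.ofReal (min ((u * x) ^ 2) 1) ∂ν := by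
  rw [← lintegral_const_mul' _ _ ENNReal.ofNat_ne_top]
  refine lintegral_mono fun x => ?_
  rw [← ENNReal.ofReal_ofNat 2, ← ENNReal.ofReal_mul zero_le_two]
  exact ENNReal.ofReal_le_ofReal (one_sub_cos_le_two_mul_min_sq_one _)

theorem IsLevyMeasure.mono {μ ν : Measure ℝ} (hν : IsLevyMeasure ν) (h : μ ≤ ν) :
    IsLevyMeasure μ :=
  ⟨le_antisymm (hν.1 ▸ h {0}) zero_le, (lintegral_mono' h le_rfl).trans_lt hν.2⟩

theorem IsLevyMeasure.measure_le_abs_lt_top {ν : Measure ℝ} (hν : IsLevyMeasure ν) {ε : ℝ}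
    (hε : 0 < ε) : ν {x | ε ≤ |x|} < ∞ := by
  have hm : ENNReal.ofReal (min (ε ^ 2) 1) ≠ 0 := by
    rw [ne_eq, ENNReal.ofReal_eq_zero, not_le]; positivity
  refine ENNReal.lt_top_of_mul_ne_top_right ?_ hm
  have hsub : {x : ℝ | ε ≤ |x|} ⊆
      {x | ENNReal.ofReal (min (ε ^ 2) 1) ≤ ENNReal.ofReal (min (x ^ 2) 1)} := fun x hx =>
    ENNReal.ofReal_le_ofReal (min_le_min_right _ (by nlinarith [abs_nonneg x, sq_abs x, hx.out]))
  exact ne_top_of_le_ne_top hν.2.ne ((mul_le_mul_right (measure_mono hsub) _).trans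
    (mul_meas_ge_le_lintegral₀ (by fun_prop) _))

theorem IsLevyMeasure.lintegral_min_sq_one_le {ν : Measure ℝ} (hν : IsLevyMeasure ν)
    {α D ε u : ℝ} (hα0 : 0 < α) (hα2 : α < 2) (hε : 0 < ε) (hD : 0 ≤ D)
    (hνD : ν.restrict {x | |x| < ε} ≤
      volume.withDensity fun x => ENNReal.ofReal (D * |x| ^ (-(1 + α))))
    (hu : 1 ≤ |u|) :
    ∫⁻ x, ENNReal.ofReal (min ((u * x) ^ 2) 1) ∂ν ≤
      ENNReal.ofReal ((2 * D * (1 / (2 - α) + 1 / α) + (ν {x | ε ≤ |x|}).toReal) * |u| ^ α) := by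
  set g : ℝ → ℝ≥0∞ := fun x => ENNReal.ofReal (min ((u * x) ^ 2) 1)
  set S : Set ℝ := {x | ε ≤ |x|}
  have hS : MeasurableSet S := measurableSet_le measurable_const measurable_abs
  have hu0 : u ≠ 0 := abs_pos.1 (one_pos.trans_le hu)
  have h1 : 1 ≤ |u| ^ α := one_le_rpow hu hα0.le
  have h2α : 0 < 2 - α := by linarith
  have hnear : ∫⁻ x in Sᶜ, g x ∂ν ≤ ENNReal.ofReal (2 * D * (1 / (2 - α) + 1 / α) * |u| ^ α) :=
    calc ∫⁻ x in Sᶜ, g x ∂ν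
        ≤ ∫⁻ x, g x ∂(volume.withDensity fun x => ENNReal.ofReal (D * |x| ^ (-(1 + α)))) :=
          lintegral_mono' (by simpa [S, compl_ofPred] using hνD) le_rfl
      _ = ∫⁻ x, ENNReal.ofReal D * ENNReal.ofReal (min ((u * x) ^ 2) 1 * |x| ^ (-(1 + α))) := by
          rw [lintegral_withDensity_eq_lintegral_mul _ (by fun_prop) (by fun_prop)]
          congr 1 with x
          simp only [Pi.mul_apply, g]
          rw [← ENNReal.ofReal_mul hD, ← ENNReal.ofReal_mul (by positivity)]
          ring_nf
      _ = _ := by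
          rw [lintegral_const_mul' _ _ ENNReal.ofReal_ne_top,
            lintegral_min_sq_one_mul_abs_rpow hα0 hα2 hu0, ← ENNReal.ofReal_mul hD]
          ring_nf
  have hfar : ∫⁻ x in S, g x ∂ν ≤ ENNReal.ofReal (ν S).toReal := by
    rw [ENNReal.ofReal_toReal (hν.measure_le_abs_lt_top hε).ne, ← setLIntegral_one]
    exact lintegral_mono fun x => ENNReal.ofReal_le_one.2 (min_le_right _ _)
  rw [← lintegral_add_compl g hS]
  refine (add_le_add hfar hnear).trans ?_
  rw [← ENNReal.ofReal_add ENNReal.toReal_nonneg (by positivity)]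
  refine ENNReal.ofReal_le_ofReal ?_
  nlinarith [ENNReal.toReal_nonneg (a := ν S)]

theorem IsLevyMeasure.exists_cosInt_le_rpow {ν : Measure ℝ} (hν : IsLevyMeasure ν)
    {α D ε : ℝ} (hα0 : 0 < α) (hα2 : α < 2) (hε : 0 < ε) (hD : 0 ≤ D)
    (hνD : ν.restrict {x | |x| < ε} ≤
      volume.withDensity fun x => ENNReal.ofReal (D * |x| ^ (-(1 + α)))) :
    ∃ K : ℝ, ∀ᶠ u in absAtTop, cosInt ν u ≤ ENNReal.ofReal (K * |u| ^ α) := by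
  refine ⟨2 * (2 * D * (1 / (2 - α) + 1 / α) + (ν {x | ε ≤ |x|}).toReal),
    ((eventually_ge_atTop 1).comap _).mono fun u hu => ?_⟩
  refine (cosInt_le_two_mul_lintegral_min_sq_one ν u).trans ?_
  rw [mul_assoc, ENNReal.ofReal_mul zero_le_two, ENNReal.ofReal_ofNat]
  gcongr
  exact hν.lintegral_min_sq_one_le hα0 hα2 hε hD hνD hu

theorem withDensity_eq_withDensity_add_withDensity_tsub {X : Type*} [MeasurableSpace X]
    {μ : Measure X} {f g : X → ℝ≥0∞} (hf : Measurable f) (hfg : f ≤ g) :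
    μ.withDensity g = μ.withDensity f + μ.withDensity (g - f) := by
  rw [← withDensity_add_left hf, add_tsub_cancel_of_le hfg]

theorem ite_abs_lt_div_abs_rpow_le {c ε α x y : ℝ} (hc : 0 ≤ c) (hα : 0 ≤ α) (hx : x ≠ 0)
    (hxy : |x| ≤ |y|) :
    (if |y| < ε then c else 0) / |y| ^ α ≤ (if |x| < ε then c else 0) / |x| ^ α := by
  split_ifs with hy hx'
  · exact div_le_div_of_nonneg_left hc (rpow_pos_of_pos (abs_pos.2 hx) _)
      (rpow_le_rpow (abs_nonneg _) hxy hα)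
  · exact absurd (hxy.trans_lt hy) hx'
  · rw [zero_div]; positivity
  · rw [zero_div, zero_div]

theorem measurable_ite_abs_lt_div_abs_rpow (c ε α : ℝ) :
    Measurable fun x : ℝ =>
      if x = 0 then 0 else ENNReal.ofReal ((if |x| < ε then c else 0) / |x| ^ (α + 1)) :=
  Measurable.ite (measurableSet_singleton 0) measurable_const
    (((Measurable.ite (measurableSet_lt measurable_abs measurable_const) measurable_const
      measurable_const).div (by fun_prop)).ennreal_ofReal)

theorem ite_div_abs_rpow_le_ofReal {c ε α : ℝ} {p : ℝ → ℝ}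
    (h : ∀ x, x ≠ 0 → |x| < ε → c ≤ |x| ^ (1 + α) * p x) (x : ℝ) :
    (if x = 0 then 0 else ENNReal.ofReal ((if |x| < ε then c else 0) / |x| ^ (α + 1)))
      ≤ ENNReal.ofReal (p x) := by
  split_ifs with hx hxε
  · exact zero_le
  · refine ENNReal.ofReal_le_ofReal ?_
    rw [div_le_iff₀ (rpow_pos_of_pos (abs_pos.2 hx) _), add_comm, mul_comm]
    exact h x hx hxε
  · rw [zero_div, ENNReal.ofReal_zero]
    exact zero_le

theorem withDensity_restrict_abs_lt_le {p : ℝ → ℝ} {α D ε : ℝ}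
    (h : ∀ x, x ≠ 0 → |x| < ε → |x| ^ (1 + α) * p x ≤ D) :
    (volume.withDensity fun x => ENNReal.ofReal (p x)).restrict {x | |x| < ε} ≤
      volume.withDensity fun x => ENNReal.ofReal (D * |x| ^ (-(1 + α))) := by
  have hA : MeasurableSet {x : ℝ | |x| < ε} := measurableSet_lt measurable_abs measurable_const
  refine le_trans ?_ (Measure.restrict_le_self (s := {x | |x| < ε}))
  rw [restrict_withDensity hA, restrict_withDensity hA]
  refine withDensity_mono ?_
  filter_upwards [ae_restrict_of_ae (Measure.ae_ne volume 0), ae_restrict_mem hA] with x hx hxε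
  refine ENNReal.ofReal_le_ofReal ?_
  rw [rpow_neg (abs_nonneg x), ← div_eq_mul_inv, le_div_iff₀ (rpow_pos_of_pos (abs_pos.2 hx) _)]
  linarith [h x hx hxε]

/-- a Lévy measure with density comparable to `|x|^{-1-α}` near the origin
belongs to `𝒮₁(α)`. -/
theorem stmt3 (α : ℝ) (hα : α ∈ Set.Ioo (0 : ℝ) 2) (ν : Measure ℝ) (hν : IsLevyMeasure ν)
    (p : ℝ → ℝ)
    (hp : ν = volume.withDensity (fun x => ENNReal.ofReal (p x)))
    (hbounds : ∃ c C : ℝ, 0 < c ∧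
      ∀ᶠ x in nhdsWithin 0 {(0 : ℝ)}ᶜ, c ≤ |x| ^ (1 + α) * p x ∧ |x| ^ (1 + α) * p x ≤ C) :
    MemS1 α ν := by
  obtain ⟨hα0, hα2⟩ := hα
  obtain ⟨c, C, hc, hev⟩ := hbounds
  obtain ⟨ε, hε, hbd⟩ := Metric.eventually_nhds_iff.1 (eventually_nhdsWithin_iff.1 hev)
  have hpε : ∀ x, x ≠ 0 → |x| < ε → c ≤ |x| ^ (1 + α) * p x ∧ |x| ^ (1 + α) * p x ≤ C :=
    fun x hx hxε => hbd (by rwa [Real.dist_0_eq_abs]) hx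
  have hdec := withDensity_eq_withDensity_add_withDensity_tsub (μ := volume)
    (measurable_ite_abs_lt_div_abs_rpow c ε α)
    (ite_div_abs_rpow_le_ofReal fun x hx hxε => (hpε x hx hxε).1)
  rw [← hp] at hdec
  have hν₂ : _ ≤ ν := hdec ▸ Measure.le_add_left le_rfl
  refine ⟨_, _, fun x => if |x| < ε then c else 0, hν.mono (hdec ▸ Measure.le_add_right le_rfl),
    hν.mono hν₂, hdec, rfl, ⟨c, c, hc, ?_⟩, fun x y hxy hy => ?_, fun x y hx hxy => ?_, ?_⟩
  · refine nhdsWithin_le_nhds (Metric.eventually_nhds_iff.2 ⟨ε, hε, fun x hx => ?_⟩)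
    rw [Real.dist_0_eq_abs] at hx
    simp [hx]
  · exact ite_abs_lt_div_abs_rpow_le hc.le hα0.le hy.ne (abs_le_abs_of_nonpos hy.le hxy)
  · exact ite_abs_lt_div_abs_rpow_le hc.le hα0.le hx.ne' (abs_le_abs_of_nonneg hx.le hxy)
  · obtain ⟨K, hK⟩ := hν.exists_cosInt_le_rpow hα0 hα2 hε (le_max_right C 0)
      (hp ▸ withDensity_restrict_abs_lt_le fun x hx hxε =>
        (hpε x hx hxε).2.trans (le_max_left C 0))
    exact ⟨K, hK.mono fun u hu => (lintegral_mono' hν₂ le_rfl).trans hu⟩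
end
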